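/- Let (c_j)_{j ∈ ℤ} be an absolutely summable sequence of real numbers with c_j = c_{-j} for all j, and let 0 ≤ a < b ≤ 1. Then (1/n) · Σ_{i=⌊an⌋+1}^{⌊bn⌋} Σ_{j=⌊an⌋+1}^{⌊bn⌋} (i/n) · c_{j-i} converges, as n → ∞, to ((b² - a²)/2) · Σ_{j ∈ ℤ} c_j. -/

import Mathlib

/-!
Substituting `k = j - i` turns the normalised double sum into `∑ₖ c k * lagWeight a b n k`,
where `n² * lagWeight a b n k` is the sum of those `i` for which both `i` and `i + k` lie in
`(⌊a n⌋, ⌊b n⌋]`. These weights lie in `[0, 1]`, and for fixed `k` the arithmetic-series formula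
shows that they tend to `(b² - a²) / 2`. Dominated convergence for series (Tannery's theorem),
with dominant `|c k|`, concludes.
-/

open Filter Finset Topology

theorem sum_Icc_intCast_mul_two {R : Type*} [CommRing R] {m n : ℤ} (h : m - 1 ≤ n) :
    (∑ i ∈ Icc m n, (i : R)) * 2 = (m + n) * (n - m + 1) := by
  induction n, h using Int.leInduction with
  | base => simp
  | succ n hmn ih =>
    rw [← insert_Icc_right_eq_Icc_add_one (by omega), sum_insert (by simp), add_mul, ih]
    push_cast
    ring

theorem tendsto_floor_mul_div_atTop {R : Type*} [Field R] [LinearOrder R] [IsStrictOrderedRing R]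
    [TopologicalSpace R] [OrderTopology R] [FloorRing R] (a : R) :
    Tendsto (fun x ↦ (⌊a * x⌋ : R) / x) atTop (𝓝 a) := by
  have lower : Tendsto (fun x : R ↦ a - x⁻¹) atTop (𝓝 a) := by
    simpa using tendsto_const_nhds.sub (tendsto_inv_atTop_zero (𝕜 := R))
  refine tendsto_of_tendsto_of_tendsto_of_le_of_le' lower tendsto_const_nhds ?_ ?_
  all_goals filter_upwards [eventually_gt_atTop 0] with x hx
  · rw [le_div_iff₀ hx, sub_mul, inv_mul_cancel₀ hx.ne']
    linarith [Int.sub_one_lt_floor (a * x)]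
  · rw [div_le_iff₀ hx]
    exact Int.floor_le _

theorem sum_Icc_sum_Icc_eq_sum_diff {M : Type*} [AddCommMonoid M] (m n : ℤ) (F : ℤ → ℤ → M) :
    ∑ i ∈ Icc m n, ∑ j ∈ Icc m n, F i (j - i) =
      ∑ k ∈ Icc (m - n) (n - m), ∑ i ∈ Icc (m + max 0 (-k)) (n - max 0 k), F i k := by
  have shift : ∀ i, ∑ j ∈ Icc m n, F i (j - i) = ∑ k ∈ Icc (m - i) (n - i), F i k := fun i ↦
    sum_nbij' (· - i) (· + i) (by intro j; simp only [mem_Icc]; omega)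
      (by intro k; simp only [mem_Icc]; omega)
      (by simp) (by simp) (by simp)
  simp only [shift]
  exact sum_comm' fun i k ↦ by simp only [mem_Icc]; omega

noncomputable def lagWeight (a b : ℝ) (n : ℕ) (k : ℤ) : ℝ :=
  (∑ i ∈ Icc (⌊a * n⌋ + 1 + max 0 (-k)) (⌊b * n⌋ - max 0 k), (i : ℝ)) / n ^ 2

theorem one_div_mul_sum_sum_eq_tsum_lagWeight (c : ℤ → ℝ) (a b : ℝ) (n : ℕ) :
    (1 / (n : ℝ)) * ∑ i ∈ Icc (⌊a * n⌋ + 1) ⌊b * n⌋, ∑ j ∈ Icc (⌊a * n⌋ + 1) ⌊b * n⌋,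
      ((i : ℝ) / n) * c (j - i) = ∑' k, c k * lagWeight a b n k := by
  rw [sum_Icc_sum_Icc_eq_sum_diff _ _ fun i k ↦ (i : ℝ) / n * c k,
    tsum_eq_sum (s := Icc (⌊a * n⌋ + 1 - ⌊b * n⌋) _)]
  · rw [mul_sum]
    refine sum_congr rfl fun k _ ↦ ?_
    rw [lagWeight, ← sum_mul, ← sum_div]
    ring
  · intro k hk
    rw [mem_Icc] at hk
    have hempty : Icc (⌊a * n⌋ + 1 + max 0 (-k)) (⌊b * n⌋ - max 0 k) = ∅ :=
      Icc_eq_empty (by omega)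
    simp [lagWeight, hempty]

theorem abs_lagWeight_le_one {a b : ℝ} (ha : 0 ≤ a) (hb : b ≤ 1) (n : ℕ) (k : ℤ) :
    |lagWeight a b n k| ≤ 1 := by
  have hA : 0 ≤ ⌊a * n⌋ := Int.floor_nonneg.2 (by positivity)
  have hB : ⌊b * n⌋ ≤ n := by
    simpa using Int.floor_le_floor (mul_le_of_le_one_left n.cast_nonneg hb)
  have hsub : Icc (⌊a * n⌋ + 1 + max 0 (-k)) (⌊b * n⌋ - max 0 k) ⊆ Icc 1 (n : ℤ) := by
    intro i
    simp only [mem_Icc]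
    omega
  have hpos : ∀ i ∈ Icc 1 (n : ℤ), (0 : ℝ) ≤ i := fun i hi ↦ by
    rw [mem_Icc] at hi
    exact_mod_cast (show (0 : ℤ) ≤ i by omega)
  have hsum : ∑ i ∈ Icc (⌊a * n⌋ + 1 + max 0 (-k)) (⌊b * n⌋ - max 0 k), (i : ℝ) ≤ n ^ 2 :=
    calc _ ≤ ∑ i ∈ Icc 1 (n : ℤ), (i : ℝ) :=
          sum_le_sum_of_subset_of_nonneg hsub fun i hi _ ↦ hpos i hi
      _ ≤ ∑ _i ∈ Icc 1 (n : ℤ), (n : ℝ) := sum_le_sum fun i hi ↦ by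
          rw [mem_Icc] at hi
          exact_mod_cast hi.2
      _ = n ^ 2 := by simp [sq]
  rw [lagWeight,
    abs_of_nonneg (div_nonneg (sum_nonneg fun i hi ↦ hpos i (hsub hi)) (by positivity))]
  exact div_le_one_of_le₀ hsum (by positivity)

theorem tendsto_lagWeight {a b : ℝ} (hab : a < b) (k : ℤ) :
    Tendsto (lagWeight a b · k) atTop (𝓝 ((b ^ 2 - a ^ 2) / 2)) := by
  have hA := (tendsto_floor_mul_div_atTop a).comp tendsto_natCast_atTop_atTop
  have hB := (tendsto_floor_mul_div_atTop b).comp tendsto_natCast_atTop_atTop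
  have hinv := tendsto_one_div_atTop_nhds_zero_nat (𝕜 := ℝ)
  have hlim := (((hA.add hB).add (hinv.const_mul ((1 + max 0 (-k) - max 0 k : ℤ) : ℝ))).mul
    ((hB.sub hA).sub (hinv.const_mul ((max 0 (-k) + max 0 k : ℤ) : ℝ)))).div_const 2
  rw [show (a + b + ((1 + max 0 (-k) - max 0 k : ℤ) : ℝ) * 0) *
      (b - a - ((max 0 (-k) + max 0 k : ℤ) : ℝ) * 0) / 2 = (b ^ 2 - a ^ 2) / 2 by ring] at hlim
  refine hlim.congr' ?_
  have hgap : ∀ᶠ n : ℕ in atTop, ((max 0 (-k) + max 0 k + 1 : ℤ) : ℝ) ≤ (b - a) * n :=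
    (tendsto_natCast_atTop_atTop.const_mul_atTop (sub_pos.2 hab)).eventually_ge_atTop _
  filter_upwards [eventually_gt_atTop 0, hgap] with n hn hgap
  have hwin : ⌊a * n⌋ + (max 0 (-k) + max 0 k + 1) ≤ ⌊b * n⌋ := by
    rw [← Int.floor_add_intCast]
    exact Int.floor_le_floor (by linarith)
  have hS := sum_Icc_intCast_mul_two (R := ℝ)
    (show ⌊a * n⌋ + 1 + max 0 (-k) - 1 ≤ ⌊b * n⌋ - max 0 k by omega)
  rw [← eq_div_iff two_ne_zero] at hS
  simp only [Function.comp_apply, lagWeight, hS]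
  push_cast
  field_simp
  ring

theorem stmt_1_general (c : ℤ → ℝ) (hsum : Summable (fun j => |c j|))
    (a b : ℝ) (ha : 0 ≤ a) (hab : a < b) (hb : b ≤ 1) :
    Filter.Tendsto (fun n : ℕ =>
      (1 / (n : ℝ)) * ∑ i ∈ Finset.Icc (⌊a * (n : ℝ)⌋ + 1) ⌊b * (n : ℝ)⌋,
        ∑ j ∈ Finset.Icc (⌊a * (n : ℝ)⌋ + 1) ⌊b * (n : ℝ)⌋, ((i : ℝ) / (n : ℝ)) * c (j - i))
      Filter.atTop (nhds (((b ^ 2 - a ^ 2) / 2) * ∑' j, c j)) := by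
  simp only [one_div_mul_sum_sum_eq_tsum_lagWeight]
  rw [mul_comm, ← tsum_mul_right]
  refine tendsto_tsum_of_dominated_convergence hsum
    (fun k ↦ (tendsto_lagWeight hab k).const_mul (c k)) (Eventually.of_forall fun n k ↦ ?_)
  rw [norm_mul, Real.norm_eq_abs, Real.norm_eq_abs]
  exact mul_le_of_le_one_right (abs_nonneg _) (abs_lagWeight_le_one ha hb n k)

theorem stmt_1 (c : ℤ → ℝ) (hsum : Summable (fun j => |c j|))
    (hsym : ∀ j, c j = c (-j)) (a b : ℝ) (ha : 0 ≤ a) (hab : a < b) (hb : b ≤ 1) :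
    Filter.Tendsto (fun n : ℕ =>
      (1 / (n : ℝ)) * ∑ i ∈ Finset.Icc (⌊a * (n : ℝ)⌋ + 1) ⌊b * (n : ℝ)⌋,
        ∑ j ∈ Finset.Icc (⌊a * (n : ℝ)⌋ + 1) ⌊b * (n : ℝ)⌋, ((i : ℝ) / (n : ℝ)) * c (j - i))
      Filter.atTop (nhds (((b ^ 2 - a ^ 2) / 2) * ∑' j, c j)) :=
  stmt_1_general c hsum a b ha hab hb
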